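/- arXiv:math/0501300 — 2 statements merged into one kernel-verified Lean document; each statement's English description precedes it below -/
import Mathlib

section
/- Let s, t ∈ ℝ with 0 ≤ s ≤ 4, t ≤ s, and t(4−s) ≤ 6s − s² − 4. Then for all P, Q ∈ Γ_n with r ≤ p_i/q_i ≤ R for all i: ((R+1)/(2R))^{s−t−1} (((4−s)R + s)/R) Ω_t(P||Q) ≤ ζ_s(Q||P) ≤ ((r+1)/(2r))^{s−t−1} (((4−s)r + s)/r) Ω_t(P||Q). -/
open Real Finset

/-- Relative information of type `s` (generalized Kullback-Leibler divergence). -/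
noncomputable def Phi (n : ℕ) (s : ℝ) (p q : Fin n → ℝ) : ℝ :=
  if s = 0 then ∑ i, q i * Real.log (q i / p i)
  else if s = 1 then ∑ i, p i * Real.log (p i / q i)
  else (s * (s - 1))⁻¹ * ((∑ i, (p i) ^ s * (q i) ^ (1 - s)) - 1)

/-- Unified relative JS and AG divergence of type `s`. -/
noncomputable def Omega (n : ℕ) (s : ℝ) (p q : Fin n → ℝ) : ℝ :=
  if s = 0 then ∑ i, p i * Real.log (2 * p i / (p i + q i))
  else if s = 1 then ∑ i, ((p i + q i) / 2) * Real.log ((p i + q i) / (2 * p i))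
  else (s * (s - 1))⁻¹ * ((∑ i, p i * ((p i + q i) / (2 * p i)) ^ s) - 1)

/-- Relative J-divergence of type `s`. -/
noncomputable def zeta (n : ℕ) (s : ℝ) (p q : Fin n → ℝ) : ℝ :=
  if s = 1 then ∑ i, (p i - q i) * Real.log ((p i + q i) / (2 * q i))
  else (s - 1)⁻¹ * ∑ i, (p i - q i) * ((p i + q i) / (2 * q i)) ^ (s - 1)

/-!
With `u i = (p i + q i) / (2 * p i)`, both divergences are averages with weights `p i`:
`Omega n t p q = ∑ p i * omegaGen t (u i)` and `zeta n s q p = ∑ p i * zetaGen s (u i)`, where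
`omegaGen t'' u = u ^ (t - 2)` and `zetaGen s'' u = u ^ (t - 2) * curvatureRatio s t u`.
The conditions on `s, t` make `curvatureRatio s t` nondecreasing on `(1/2, ∞)`, and every `u i` lies
in `[(R + 1) / (2 * R), (r + 1) / (2 * r)]`, so on that interval the ratio lies between its endpoint
values `m ≤ M`, which are the two constants of the theorem. Hence `M * omegaGen t - zetaGen s` and
`zetaGen s - m * omegaGen t` are convex there; they vanish at `1 = ∑ p i * u i`, and Jensen's
inequality gives both bounds.
-/

open Set

noncomputable def omegaGen (t u : ℝ) : ℝ :=
  if t = 0 then -log u else if t = 1 then u * log u else (u ^ t - 1) / (t * (t - 1))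

noncomputable def omegaGenDeriv (t u : ℝ) : ℝ :=
  if t = 1 then log u + 1 else u ^ (t - 1) / (t - 1)

noncomputable def zetaLog (s u : ℝ) : ℝ :=
  if s = 1 then log u else u ^ (s - 1) / (s - 1)

noncomputable def zetaGen (s u : ℝ) : ℝ := 2 * (u - 1) * zetaLog s u

noncomputable def zetaGenDeriv (s u : ℝ) : ℝ := 2 * zetaLog s u + 2 * (u - 1) * u ^ (s - 2)

noncomputable def curvatureRatio (s t u : ℝ) : ℝ := 2 * u ^ (s - t - 1) * (s * (u - 1) + 2)

lemma omegaGen_one (t : ℝ) : omegaGen t 1 = 0 := by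
  unfold omegaGen; split_ifs <;> simp

lemma zetaGen_one (s : ℝ) : zetaGen s 1 = 0 := by
  simp [zetaGen]

lemma hasDerivAt_omegaGen (t : ℝ) {u : ℝ} (hu : 0 < u) :
    HasDerivAt (omegaGen t) (omegaGenDeriv t u) u := by
  unfold omegaGen omegaGenDeriv
  rcases eq_or_ne t 0 with rfl | ht0
  · simp only [if_true, zero_ne_one, if_false]
    exact (hasDerivAt_log hu.ne').neg.congr_deriv (by norm_num [rpow_neg_one, div_neg])
  rcases eq_or_ne t 1 with rfl | ht1
  · simp only [one_ne_zero, if_true, if_false]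
    exact ((hasDerivAt_id' u).mul (hasDerivAt_log hu.ne')).congr_deriv (by field_simp)
  · simp only [ht0, ht1, if_false]
    refine (((hasDerivAt_rpow_const (Or.inl hu.ne')).sub_const 1).div_const
      (t * (t - 1))).congr_deriv ?_
    field_simp [sub_ne_zero.mpr ht1]

lemma hasDerivAt_omegaGenDeriv (t : ℝ) {u : ℝ} (hu : 0 < u) :
    HasDerivAt (omegaGenDeriv t) (u ^ (t - 2)) u := by
  unfold omegaGenDeriv
  rcases eq_or_ne t 1 with rfl | ht1
  · simp only [if_true]
    exact ((hasDerivAt_log hu.ne').add_const 1).congr_deriv (by norm_num [rpow_neg_one])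
  · simp only [ht1, if_false]
    refine ((hasDerivAt_rpow_const (Or.inl hu.ne')).div_const (t - 1)).congr_deriv ?_
    field_simp [sub_ne_zero.mpr ht1]; ring_nf

lemma hasDerivAt_zetaLog (s : ℝ) {u : ℝ} (hu : 0 < u) :
    HasDerivAt (zetaLog s) (u ^ (s - 2)) u := by
  unfold zetaLog
  rcases eq_or_ne s 1 with rfl | hs1
  · simp only [if_true]
    exact (hasDerivAt_log hu.ne').congr_deriv (by norm_num [rpow_neg_one])
  · simp only [hs1, if_false]
    refine ((hasDerivAt_rpow_const (Or.inl hu.ne')).div_const (s - 1)).congr_deriv ?_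
    field_simp [sub_ne_zero.mpr hs1]; ring_nf

lemma hasDerivAt_zetaGen (s : ℝ) {u : ℝ} (hu : 0 < u) :
    HasDerivAt (zetaGen s) (zetaGenDeriv s u) u :=
  ((((hasDerivAt_id' u).sub_const 1).const_mul 2).mul (hasDerivAt_zetaLog s hu)).congr_deriv
    (by simp only [zetaGenDeriv]; ring)

lemma hasDerivAt_zetaGenDeriv (s : ℝ) {u : ℝ} (hu : 0 < u) :
    HasDerivAt (zetaGenDeriv s) (2 * u ^ (s - 3) * (s * (u - 1) + 2)) u := by
  refine (((hasDerivAt_zetaLog s hu).const_mul 2).add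
    ((((hasDerivAt_id' u).sub_const 1).const_mul 2).mul
      (hasDerivAt_rpow_const (Or.inl hu.ne')))).congr_deriv ?_
  rw [show s - 2 = s - 3 + 1 by ring, rpow_add hu, rpow_one, add_sub_cancel_right]
  ring

lemma hasDerivAt_curvatureRatio (s t : ℝ) {u : ℝ} (hu : 0 < u) :
    HasDerivAt (curvatureRatio s t)
      (2 * u ^ (s - t - 2) * (s * (s - t) * u + (s - t - 1) * (2 - s))) u := by
  refine (((hasDerivAt_rpow_const (Or.inl hu.ne')).const_mul 2).mul
    ((((hasDerivAt_id' u).sub_const 1).const_mul s).add_const 2)).congr_deriv ?_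
  rw [show s - t - 1 = s - t - 2 + 1 by ring, rpow_add hu, rpow_one, add_sub_cancel_right]
  ring

lemma curvatureRatio_monotoneOn {s t : ℝ} (hs0 : 0 ≤ s) (hst : t ≤ s)
    (hts : t * (4 - s) ≤ 6 * s - s ^ 2 - 4) :
    MonotoneOn (curvatureRatio s t) (Ioi (1 / 2)) := by
  have hpos : ∀ u ∈ Ioi (1 / 2 : ℝ), 0 < u := fun u hu => (by norm_num : (0 : ℝ) < 1 / 2).trans hu
  refine monotoneOn_of_hasDerivWithinAt_nonneg (convex_Ioi _)
    (fun u hu => (hasDerivAt_curvatureRatio s t (hpos u hu)).continuousAt.continuousWithinAt)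
    (fun u hu => (hasDerivAt_curvatureRatio s t (hpos u (interior_subset hu))).hasDerivWithinAt)
    fun u hu => ?_
  rw [interior_Ioi] at hu
  have hu' : (1 / 2 : ℝ) < u := hu
  have hslope : 0 ≤ s * (s - t) * (u - 1 / 2) :=
    mul_nonneg (mul_nonneg hs0 (sub_nonneg.mpr hst)) (by linarith)
  have := rpow_pos_of_pos (hpos u hu) (s - t - 2)
  apply mul_nonneg (by positivity)
  nlinarith

lemma rpow_mul_curvatureRatio (s t : ℝ) {u : ℝ} (hu : 0 < u) :
    u ^ (t - 2) * curvatureRatio s t u = 2 * u ^ (s - 3) * (s * (u - 1) + 2) := by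
  rw [curvatureRatio, show s - 3 = t - 2 + (s - t - 1) by ring, rpow_add hu]
  ring

lemma curvatureRatio_add_one_div (s t : ℝ) {x : ℝ} (hx : x ≠ 0) :
    curvatureRatio s t ((x + 1) / (2 * x)) =
      ((x + 1) / (2 * x)) ^ (s - t - 1) * (((4 - s) * x + s) / x) := by
  rw [curvatureRatio]
  field_simp
  ring

lemma convexOn_of_hasDerivAt2_nonneg {D : Set ℝ} (hD : Convex ℝ D) {f f' f'' : ℝ → ℝ}
    (hf : ∀ x ∈ D, HasDerivAt f (f' x) x) (hf' : ∀ x ∈ D, HasDerivAt f' (f'' x) x)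
    (hf'' : ∀ x ∈ D, 0 ≤ f'' x) : ConvexOn ℝ D f :=
  convexOn_of_hasDerivWithinAt2_nonneg hD
    (fun x hx => (hf x hx).continuousAt.continuousWithinAt)
    (fun x hx => (hf x (interior_subset hx)).hasDerivWithinAt)
    (fun x hx => (hf' x (interior_subset hx)).hasDerivWithinAt)
    (fun x hx => hf'' x (interior_subset hx))

lemma sum_mul_le_sum_mul_of_convexOn_sub {ι : Type*} (S : Finset ι) {D : Set ℝ} {f g : ℝ → ℝ}
    (hfg : ConvexOn ℝ D (f - g)) (h1 : f 1 = g 1) {w u : ι → ℝ} (hw0 : ∀ i ∈ S, 0 ≤ w i)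
    (hw1 : ∑ i ∈ S, w i = 1) (hwu : ∑ i ∈ S, w i * u i = 1) (hu : ∀ i ∈ S, u i ∈ D) :
    ∑ i ∈ S, w i * g (u i) ≤ ∑ i ∈ S, w i * f (u i) := by
  have hjensen := hfg.map_sum_le hw0 hw1 hu
  simp only [smul_eq_mul, hwu, Pi.sub_apply, h1, sub_self, mul_sub, sum_sub_distrib] at hjensen
  linarith

lemma mul_sum_omegaGen_le_sum_zetaGen_le {ι : Type*} (S : Finset ι) (s t : ℝ)
    {a b m M : ℝ} (ha : 0 < a) (hm : ∀ u ∈ Icc a b, m ≤ curvatureRatio s t u)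
    (hM : ∀ u ∈ Icc a b, curvatureRatio s t u ≤ M) {w u : ι → ℝ} (hw0 : ∀ i ∈ S, 0 ≤ w i)
    (hw1 : ∑ i ∈ S, w i = 1) (hwu : ∑ i ∈ S, w i * u i = 1) (hu : ∀ i ∈ S, u i ∈ Icc a b) :
    m * ∑ i ∈ S, w i * omegaGen t (u i) ≤ ∑ i ∈ S, w i * zetaGen s (u i) ∧
      ∑ i ∈ S, w i * zetaGen s (u i) ≤ M * ∑ i ∈ S, w i * omegaGen t (u i) := by
  have hpos : ∀ x ∈ Icc a b, 0 < x := fun x hx => ha.trans_le hx.1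
  have hderiv (K : ℝ) : ∀ x ∈ Icc a b, HasDerivAt (fun y => K * omegaGen t y - zetaGen s y)
      (K * omegaGenDeriv t x - zetaGenDeriv s x) x := fun x hx =>
    ((hasDerivAt_omegaGen t (hpos x hx)).const_mul K).sub (hasDerivAt_zetaGen s (hpos x hx))
  have hderiv2 (K : ℝ) : ∀ x ∈ Icc a b,
      HasDerivAt (fun y => K * omegaGenDeriv t y - zetaGenDeriv s y)
        (x ^ (t - 2) * (K - curvatureRatio s t x)) x := fun x hx =>
    (((hasDerivAt_omegaGenDeriv t (hpos x hx)).const_mul K).sub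
      (hasDerivAt_zetaGenDeriv s (hpos x hx))).congr_deriv
      (by rw [← rpow_mul_curvatureRatio s t (hpos x hx)]; ring)
  constructor
  · have hconv : ConvexOn ℝ (Icc a b) (fun y => zetaGen s y - m * omegaGen t y) := by
      refine (convexOn_of_hasDerivAt2_nonneg (convex_Icc a b) (fun x hx => (hderiv m x hx).neg)
        (fun x hx => (hderiv2 m x hx).neg) fun x hx => ?_).congr fun x _ => by simp
      simpa only [← mul_neg, neg_sub] using
        mul_nonneg (rpow_pos_of_pos (hpos x hx) _).le (sub_nonneg.mpr (hm x hx))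
    rw [mul_sum]
    simp_rw [← mul_assoc, mul_comm m, mul_assoc]
    exact sum_mul_le_sum_mul_of_convexOn_sub S hconv (by simp [omegaGen_one, zetaGen_one])
      hw0 hw1 hwu hu
  · have hconv : ConvexOn ℝ (Icc a b) (fun y => M * omegaGen t y - zetaGen s y) :=
      convexOn_of_hasDerivAt2_nonneg (convex_Icc a b) (hderiv M) (hderiv2 M) fun x hx =>
        mul_nonneg (rpow_pos_of_pos (hpos x hx) _).le (sub_nonneg.mpr (hM x hx))
    rw [mul_sum]
    simp_rw [← mul_assoc, mul_comm M, mul_assoc]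
    exact sum_mul_le_sum_mul_of_convexOn_sub S hconv (by simp [omegaGen_one, zetaGen_one])
      hw0 hw1 hwu hu

lemma Omega_eq_sum_omegaGen {n : ℕ} (t : ℝ) {p q : Fin n → ℝ} (hp : ∀ i, 0 < p i)
    (hp1 : ∑ i, p i = 1) :
    Omega n t p q = ∑ i, p i * omegaGen t ((p i + q i) / (2 * p i)) := by
  unfold Omega omegaGen
  split_ifs with ht0 ht1
  · refine sum_congr rfl fun i _ => ?_
    rw [← inv_div, log_inv, mul_neg]
  · refine sum_congr rfl fun i _ => ?_
    field_simp [(hp i).ne']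
  · simp only [mul_div_assoc', ← sum_div, mul_sub, mul_one, sum_sub_distrib, hp1]
    ring

lemma zeta_eq_sum_zetaGen {n : ℕ} (s : ℝ) {p q : Fin n → ℝ} (hp : ∀ i, 0 < p i) :
    zeta n s q p = ∑ i, p i * zetaGen s ((p i + q i) / (2 * p i)) := by
  unfold zeta zetaGen zetaLog
  split_ifs with hs1
  · refine sum_congr rfl fun i _ => ?_
    rw [add_comm (q i)]
    field_simp [(hp i).ne']
    ring
  · rw [mul_sum]
    refine sum_congr rfl fun i _ => ?_
    rw [add_comm (q i)]
    field_simp [(hp i).ne']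
    ring

lemma add_div_two_mul_mem_Icc {p q r R : ℝ} (hp : 0 < p) (hq : 0 < q) (hr : 0 < r)
    (hR : 0 < R) (h : r ≤ p / q ∧ p / q ≤ R) :
    (p + q) / (2 * p) ∈ Icc ((R + 1) / (2 * R)) ((r + 1) / (2 * r)) := by
  rw [le_div_iff₀ hq, div_le_iff₀ hq] at h
  constructor
  · rw [div_le_div_iff₀ (by positivity) (by positivity)]
    nlinarith
  · rw [div_le_div_iff₀ (by positivity) (by positivity)]
    nlinarith

theorem stmt_15_general (s t : ℝ) (hs0 : 0 ≤ s) (hst : t ≤ s) (hts : t * (4 - s) ≤ 6 * s - s ^ 2 - 4)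
    (n : ℕ) (p q : Fin n → ℝ)
    (hp : ∀ i, 0 < p i) (hq : ∀ i, 0 < q i)
    (hp1 : ∑ i, p i = 1) (hq1 : ∑ i, q i = 1)
    (r R : ℝ) (hr : 0 < r) (hrR : r ≤ R)
    (hbound : ∀ i, r ≤ p i / q i ∧ p i / q i ≤ R) :
    ((R + 1) / (2 * R)) ^ (s - t - 1) * (((4 - s) * R + s) / R) * Omega n t p q ≤ zeta n s q p ∧
      zeta n s q p ≤ ((r + 1) / (2 * r)) ^ (s - t - 1) * (((4 - s) * r + s) / r) * Omega n t p q := by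
  have hR : 0 < R := hr.trans_le hrR
  set a := (R + 1) / (2 * R)
  set b := (r + 1) / (2 * r)
  have ha : 1 / 2 < a := by rw [lt_div_iff₀ (by positivity)]; linarith
  have hab : Icc a b ⊆ Ioi (1 / 2) := fun x hx => ha.trans_le hx.1
  have hmono := curvatureRatio_monotoneOn hs0 hst hts
  have hmean : ∑ i, p i * ((p i + q i) / (2 * p i)) = 1 := calc
    _ = ∑ i, (p i + q i) / 2 := sum_congr rfl fun i _ => by field_simp [(hp i).ne']
    _ = 1 := by rw [← sum_div, sum_add_distrib, hp1, hq1]; norm_num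
  obtain ⟨hlow, hupp⟩ := mul_sum_omegaGen_le_sum_zetaGen_le univ s t (by linarith)
    (fun u hu => hmono (hab (left_mem_Icc.mpr (hu.1.trans hu.2))) (hab hu) hu.1)
    (fun u hu => hmono (hab hu) (hab (right_mem_Icc.mpr (hu.1.trans hu.2))) hu.2)
    (fun i _ => (hp i).le) hp1 hmean
    (fun i _ => add_div_two_mul_mem_Icc (hp i) (hq i) hr hR (hbound i))
  rw [← curvatureRatio_add_one_div s t hR.ne', ← curvatureRatio_add_one_div s t hr.ne',
    Omega_eq_sum_omegaGen t hp hp1, zeta_eq_sum_zetaGen s hp]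
  exact ⟨hlow, hupp⟩

theorem stmt_15 (s t : ℝ) (hs0 : 0 ≤ s) (hs4 : s ≤ 4) (hst : t ≤ s) (hts : t * (4 - s) ≤ 6 * s - s ^ 2 - 4)
    (n : ℕ) (hn : 2 ≤ n) (p q : Fin n → ℝ)
    (hp : ∀ i, 0 < p i) (hq : ∀ i, 0 < q i)
    (hp1 : ∑ i, p i = 1) (hq1 : ∑ i, q i = 1)
    (r R : ℝ) (hr : 0 < r) (hrR : r ≤ R)
    (hbound : ∀ i, r ≤ p i / q i ∧ p i / q i ≤ R) :
    ((R + 1) / (2 * R)) ^ (s - t - 1) * (((4 - s) * R + s) / R) * Omega n t p q ≤ zeta n s q p ∧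
      zeta n s q p ≤ ((r + 1) / (2 * r)) ^ (s - t - 1) * (((4 - s) * r + s) / r) * Omega n t p q :=
  stmt_15_general s t hs0 hst hts n p q hp hq hp1 hq1 r R hr hrR hbound
end

section
/- Let s, t ∈ ℝ with 0 ≤ s ≤ 4, s ≤ t, and s(t − s + 6) ≤ 4(1 + t). Then for all P, Q ∈ Γ_n with r ≤ p_i/q_i ≤ R for all i: ((R+1)/2)^{s−t−1} (sR + 4 − s) Ω_t(Q||P) ≤ ζ_s(P||Q) ≤ ((r+1)/2)^{s−t−1} (sr + 4 − s) Ω_t(Q||P). -/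
open Real Finset

/-!
Both divergences are Csiszár sums `∑ q_i f(p_i / q_i)` whose kernels vanish at `1`: for `ζ_s`,
`f(x) = (x - 1) u ^ (s - 1) / (s - 1)`, and for `Ω_t(Q‖P)`, `g(x) = (u ^ t - 1) / (t (t - 1))`,
where `u = (x + 1) / 2` (with logarithmic limits at the exceptional exponents). Their second
derivatives satisfy `f'' = g'' η` with `g'' > 0` and `η(x) = u ^ (s - t - 1) (s x + 4 - s)`, which
is antitone on `[0, ∞)` when `0 ≤ s ≤ t` and `s (t - s + 6) ≤ 4 (1 + t)`. Hence `f - η(R) g` and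
`η(r) g - f` are convex on `[r, R]`, and Jensen's inequality at the barycentre
`∑ q_i (p_i / q_i) = 1` gives both bounds.
-/

section Jensen

theorem convexOn_sub_of_deriv2_le {D : Set ℝ} (hD : Convex ℝ D) {f f' f'' g g' g'' : ℝ → ℝ}
    (hf : ∀ x ∈ D, HasDerivAt f (f' x) x) (hf' : ∀ x ∈ D, HasDerivAt f' (f'' x) x)
    (hg : ∀ x ∈ D, HasDerivAt g (g' x) x) (hg' : ∀ x ∈ D, HasDerivAt g' (g'' x) x)
    (hle : ∀ x ∈ interior D, g'' x ≤ f'' x) :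
    ConvexOn ℝ D (fun x => f x - g x) :=
  convexOn_of_hasDerivWithinAt2_nonneg hD (f' := fun x => f' x - g' x)
    (f'' := fun x => f'' x - g'' x)
    (fun x hx => ((hf x hx).sub (hg x hx)).continuousAt.continuousWithinAt)
    (fun x hx => ((hf x (interior_subset hx)).sub (hg x (interior_subset hx))).hasDerivWithinAt)
    (fun x hx => ((hf' x (interior_subset hx)).sub (hg' x (interior_subset hx))).hasDerivWithinAt)
    (fun x hx => sub_nonneg.2 (hle x hx))

theorem sum_mul_le_sum_mul_of_deriv2_le {ι : Type*} {s : Finset ι} {w x : ι → ℝ} {D : Set ℝ}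
    (hD : Convex ℝ D) {f f' f'' g g' g'' : ℝ → ℝ}
    (hf : ∀ y ∈ D, HasDerivAt f (f' y) y) (hf' : ∀ y ∈ D, HasDerivAt f' (f'' y) y)
    (hg : ∀ y ∈ D, HasDerivAt g (g' y) y) (hg' : ∀ y ∈ D, HasDerivAt g' (g'' y) y)
    (hle : ∀ y ∈ interior D, g'' y ≤ f'' y)
    (hw : ∀ i ∈ s, 0 ≤ w i) (hw1 : ∑ i ∈ s, w i = 1) (hx : ∀ i ∈ s, x i ∈ D)
    {c : ℝ} (hwx : ∑ i ∈ s, w i * x i = c) (hfg : f c = g c) :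
    ∑ i ∈ s, w i * g (x i) ≤ ∑ i ∈ s, w i * f (x i) := by
  have hJensen := (convexOn_sub_of_deriv2_le hD hf hf' hg hg' hle).map_sum_le hw hw1 hx
  simp only [smul_eq_mul, hwx, hfg, sub_self, mul_sub, sum_sub_distrib] at hJensen
  linarith

end Jensen

section Kernels

noncomputable def rpowDivOrLog (a u : ℝ) : ℝ := if a = 0 then log u else u ^ a / a

theorem hasDerivAt_rpowDivOrLog (a : ℝ) {u : ℝ} (hu : 0 < u) :
    HasDerivAt (rpowDivOrLog a) (u ^ (a - 1)) u := by
  by_cases ha : a = 0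
  · subst ha
    have e : rpowDivOrLog 0 = log := funext fun v => if_pos rfl
    rw [e, zero_sub, rpow_neg_one]
    exact hasDerivAt_log hu.ne'
  · have e : rpowDivOrLog a = fun v => v ^ a / a := funext fun v => if_neg ha
    rw [e]
    refine ((hasDerivAt_rpow_const (p := a) (Or.inl hu.ne')).div_const a).congr_deriv ?_
    rw [mul_div_right_comm, div_self ha, one_mul]

theorem hasDerivAt_half_add_one (x : ℝ) : HasDerivAt (fun y : ℝ => (y + 1) / 2) 2⁻¹ x := by
  simpa using ((hasDerivAt_id x).add_const 1).div_const 2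


noncomputable def zetaKernel (s x : ℝ) : ℝ := (x - 1) * rpowDivOrLog (s - 1) ((x + 1) / 2)

noncomputable def zetaKernelDeriv (s x : ℝ) : ℝ :=
  rpowDivOrLog (s - 1) ((x + 1) / 2) + (x - 1) / 2 * ((x + 1) / 2) ^ (s - 2)

noncomputable def omegaKernel (t x : ℝ) : ℝ :=
  if t = 0 then -log ((x + 1) / 2)
  else if t = 1 then (x + 1) / 2 * log ((x + 1) / 2)
  else (t * (t - 1))⁻¹ * (((x + 1) / 2) ^ t - 1)

noncomputable def omegaKernelDeriv (t x : ℝ) : ℝ :=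
  if t = 1 then (log ((x + 1) / 2) + 1) / 2 else (t - 1)⁻¹ * ((x + 1) / 2) ^ (t - 1) / 2

noncomputable def kernelRatio (s t x : ℝ) : ℝ := ((x + 1) / 2) ^ (s - t - 1) * (s * x + 4 - s)

variable {x : ℝ}

theorem zetaKernel_one (s : ℝ) : zetaKernel s 1 = 0 := by simp [zetaKernel]

theorem omegaKernel_one (t : ℝ) : omegaKernel t 1 = 0 := by
  unfold omegaKernel; split_ifs <;> norm_num

theorem hasDerivAt_rpowDivOrLog_half_add_one (a : ℝ) (hx : -1 < x) :
    HasDerivAt (fun y => rpowDivOrLog a ((y + 1) / 2)) (((x + 1) / 2) ^ (a - 1) * 2⁻¹) x :=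
  (hasDerivAt_rpowDivOrLog a (by linarith)).comp x (hasDerivAt_half_add_one x)

theorem hasDerivAt_rpow_half_add_one (a : ℝ) (hx : -1 < x) :
    HasDerivAt (fun y => ((y + 1) / 2) ^ a) (2⁻¹ * a * ((x + 1) / 2) ^ (a - 1)) x :=
  (hasDerivAt_half_add_one x).rpow_const (Or.inl (by linarith))

theorem hasDerivAt_log_half_add_one (hx : -1 < x) :
    HasDerivAt (fun y => log ((y + 1) / 2)) (2⁻¹ / ((x + 1) / 2)) x :=
  (hasDerivAt_half_add_one x).log (by linarith)

theorem hasDerivAt_zetaKernel (s : ℝ) (hx : -1 < x) :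
    HasDerivAt (zetaKernel s) (zetaKernelDeriv s x) x := by
  refine (((hasDerivAt_id x).sub_const 1).mul
    (hasDerivAt_rpowDivOrLog_half_add_one (s - 1) hx)).congr_deriv ?_
  rw [zetaKernelDeriv, show s - 1 - 1 = s - 2 by ring]
  simp only [id]
  ring

theorem hasDerivAt_zetaKernelDeriv (s : ℝ) (hx : -1 < x) :
    HasDerivAt (zetaKernelDeriv s) (((x + 1) / 2) ^ (s - 3) * (s * x + 4 - s) / 4) x := by
  have hu : 0 < (x + 1) / 2 := by linarith
  refine ((hasDerivAt_rpowDivOrLog_half_add_one (s - 1) hx).add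
    ((((hasDerivAt_id x).sub_const 1).div_const 2).mul
      (hasDerivAt_rpow_half_add_one (s - 2) hx))).congr_deriv ?_
  rw [show s - 2 - 1 = s - 3 by ring, show s - 1 - 1 = s - 2 by ring,
    show s - 2 = s - 3 + 1 by ring, rpow_add hu, rpow_one]
  simp only [id]
  ring

theorem hasDerivAt_omegaKernel (t : ℝ) (hx : -1 < x) :
    HasDerivAt (omegaKernel t) (omegaKernelDeriv t x) x := by
  have hu : 0 < (x + 1) / 2 := by linarith
  unfold omegaKernel omegaKernelDeriv
  by_cases ht0 : t = 0
  · subst ht0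
    simp only [if_pos, if_neg zero_ne_one]
    refine (hasDerivAt_log_half_add_one hx).neg.congr_deriv ?_
    rw [zero_sub, rpow_neg_one]
    field_simp
  by_cases ht1 : t = 1
  · subst ht1
    simp only [if_pos, if_neg one_ne_zero]
    refine ((hasDerivAt_half_add_one x).mul (hasDerivAt_log_half_add_one hx)).congr_deriv ?_
    rw [mul_div_cancel₀ _ hu.ne']
    ring
  · simp only [if_neg ht0, if_neg ht1]
    refine (((hasDerivAt_rpow_half_add_one t hx).sub_const 1).const_mul _).congr_deriv ?_
    field_simp

theorem hasDerivAt_omegaKernelDeriv (t : ℝ) (hx : -1 < x) :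
    HasDerivAt (omegaKernelDeriv t) (((x + 1) / 2) ^ (t - 2) / 4) x := by
  unfold omegaKernelDeriv
  by_cases ht1 : t = 1
  · subst ht1
    simp only [if_pos]
    refine (((hasDerivAt_log_half_add_one hx).add_const 1).div_const 2).congr_deriv ?_
    rw [show (1 : ℝ) - 2 = -1 by norm_num, rpow_neg_one]
    field_simp
    ring
  · simp only [if_neg ht1]
    refine (((hasDerivAt_rpow_half_add_one (t - 1) hx).const_mul _).div_const 2).congr_deriv ?_
    rw [show t - 1 - 1 = t - 2 by ring]
    field_simp [sub_ne_zero.2 ht1]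
    ring

theorem zetaKernel_deriv2_eq (s t : ℝ) (hx : -1 < x) :
    ((x + 1) / 2) ^ (s - 3) * (s * x + 4 - s) / 4
      = ((x + 1) / 2) ^ (t - 2) / 4 * kernelRatio s t x := by
  rw [kernelRatio, show s - 3 = t - 2 + (s - t - 1) by ring, rpow_add (by linarith)]
  ring

theorem hasDerivAt_kernelRatio (s t : ℝ) (hx : -1 < x) :
    HasDerivAt (kernelRatio s t)
      (((x + 1) / 2) ^ (s - t - 2) / 2 * ((s - t) * (s * x + 4 - s) + 2 * s - 4)) x := by
  have hu : 0 < (x + 1) / 2 := by linarith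
  refine ((hasDerivAt_rpow_half_add_one (s - t - 1) hx).mul
    ((((hasDerivAt_id x).const_mul s).add_const 4).sub_const s)).congr_deriv ?_
  rw [show s - t - 1 - 1 = s - t - 2 by ring, show s - t - 1 = s - t - 2 + 1 by ring,
    rpow_add hu, rpow_one]
  simp only [id]
  ring

theorem antitoneOn_kernelRatio {s t : ℝ} (hs0 : 0 ≤ s) (hst : s ≤ t)
    (hts : s * (t - s + 6) ≤ 4 * (1 + t)) : AntitoneOn (kernelRatio s t) (Set.Ici 0) := by
  have hderiv : ∀ x ∈ Set.Ici (0 : ℝ), HasDerivAt (kernelRatio s t)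
      (((x + 1) / 2) ^ (s - t - 2) / 2 * ((s - t) * (s * x + 4 - s) + 2 * s - 4)) x :=
    fun x hx => hasDerivAt_kernelRatio s t (by linarith [Set.mem_Ici.1 hx])
  refine antitoneOn_of_hasDerivWithinAt_nonpos (convex_Ici 0)
    (fun x hx => (hderiv x hx).continuousAt.continuousWithinAt)
    (fun x hx => (hderiv x (interior_subset hx)).hasDerivWithinAt) fun x hx => ?_
  have hx0 : 0 ≤ x := interior_subset hx
  -- `s x (s - t) ≤ 0`, and at `x = 0` the bracket is `s (t - s + 6) - 4 (1 + t)`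
  have hbracket : (s - t) * (s * x + 4 - s) + 2 * s - 4 ≤ 0 := by
    nlinarith [mul_nonneg (sub_nonneg.2 hst) (mul_nonneg hs0 hx0)]
  exact mul_nonpos_of_nonneg_of_nonpos (by positivity) hbracket

end Kernels

section Comparison

variable {ι : Type*} {S : Finset ι} {w x : ι → ℝ} {s t r R : ℝ}

theorem mul_sum_omegaKernel_le_sum_zetaKernel (hr : -1 < r) {m : ℝ}
    (hm : ∀ y ∈ Set.Ioo r R, m ≤ kernelRatio s t y) (hw : ∀ i ∈ S, 0 ≤ w i)
    (hw1 : ∑ i ∈ S, w i = 1) (hx : ∀ i ∈ S, x i ∈ Set.Icc r R) (hwx : ∑ i ∈ S, w i * x i = 1) :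
    m * ∑ i ∈ S, w i * omegaKernel t (x i) ≤ ∑ i ∈ S, w i * zetaKernel s (x i) := by
  have hD : ∀ y ∈ Set.Icc r R, -1 < y := fun y hy => hr.trans_le hy.1
  rw [mul_sum]
  simp_rw [mul_left_comm m]
  refine sum_mul_le_sum_mul_of_deriv2_le (convex_Icc r R)
    (fun y hy => hasDerivAt_zetaKernel s (hD y hy))
    (fun y hy => hasDerivAt_zetaKernelDeriv s (hD y hy))
    (fun y hy => (hasDerivAt_omegaKernel t (hD y hy)).const_mul m)
    (fun y hy => (hasDerivAt_omegaKernelDeriv t (hD y hy)).const_mul m) (fun y hy => ?_)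
    hw hw1 hx hwx (by rw [zetaKernel_one, omegaKernel_one, mul_zero])
  rw [interior_Icc] at hy
  have hy' : -1 < y := hD y (Set.Ioo_subset_Icc_self hy)
  rw [zetaKernel_deriv2_eq s t hy', mul_comm m]
  exact mul_le_mul_of_nonneg_left (hm y hy) (div_nonneg (rpow_nonneg (by linarith) _) (by norm_num))

theorem sum_zetaKernel_le_mul_sum_omegaKernel (hr : -1 < r) {M : ℝ}
    (hM : ∀ y ∈ Set.Ioo r R, kernelRatio s t y ≤ M) (hw : ∀ i ∈ S, 0 ≤ w i)
    (hw1 : ∑ i ∈ S, w i = 1) (hx : ∀ i ∈ S, x i ∈ Set.Icc r R) (hwx : ∑ i ∈ S, w i * x i = 1) :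
    ∑ i ∈ S, w i * zetaKernel s (x i) ≤ M * ∑ i ∈ S, w i * omegaKernel t (x i) := by
  have hD : ∀ y ∈ Set.Icc r R, -1 < y := fun y hy => hr.trans_le hy.1
  rw [mul_sum]
  simp_rw [mul_left_comm M]
  refine sum_mul_le_sum_mul_of_deriv2_le (convex_Icc r R)
    (fun y hy => (hasDerivAt_omegaKernel t (hD y hy)).const_mul M)
    (fun y hy => (hasDerivAt_omegaKernelDeriv t (hD y hy)).const_mul M)
    (fun y hy => hasDerivAt_zetaKernel s (hD y hy))
    (fun y hy => hasDerivAt_zetaKernelDeriv s (hD y hy)) (fun y hy => ?_)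
    hw hw1 hx hwx (by rw [zetaKernel_one, omegaKernel_one, mul_zero])
  rw [interior_Icc] at hy
  have hy' : -1 < y := hD y (Set.Ioo_subset_Icc_self hy)
  rw [zetaKernel_deriv2_eq s t hy', mul_comm M]
  exact mul_le_mul_of_nonneg_left (hM y hy) (div_nonneg (rpow_nonneg (by linarith) _) (by norm_num))

end Comparison

theorem half_div_add_one {a b : ℝ} (hb : b ≠ 0) : (a / b + 1) / 2 = (a + b) / (2 * b) := by
  field_simp

theorem zeta_eq_sum_zetaKernel (n : ℕ) (s : ℝ) (p q : Fin n → ℝ) (hq : ∀ i, q i ≠ 0) :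
    zeta n s p q = ∑ i, q i * zetaKernel s (p i / q i) := by
  have hterm : ∀ i, q i * zetaKernel s (p i / q i)
      = (p i - q i) * rpowDivOrLog (s - 1) ((p i + q i) / (2 * q i)) := fun i => by
    rw [zetaKernel, half_div_add_one (hq i), ← mul_assoc, mul_sub, mul_div_cancel₀ _ (hq i),
      mul_one]
  simp only [hterm, zeta, rpowDivOrLog, sub_eq_zero]
  split_ifs
  · rfl
  · rw [mul_sum]
    exact sum_congr rfl fun i _ => by ring

theorem Omega_eq_sum_omegaKernel (n : ℕ) (t : ℝ) (p q : Fin n → ℝ) (hq : ∀ i, q i ≠ 0)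
    (hq1 : ∑ i, q i = 1) : Omega n t q p = ∑ i, q i * omegaKernel t (p i / q i) := by
  have hu : ∀ i, (p i / q i + 1) / 2 = (q i + p i) / (2 * q i) := fun i => by
    rw [half_div_add_one (hq i), add_comm]
  unfold Omega omegaKernel
  split_ifs with ht0 ht1
  · refine sum_congr rfl fun i _ => ?_
    rw [hu, ← log_inv, inv_div]
  · refine sum_congr rfl fun i _ => ?_
    rw [hu, ← mul_assoc, mul_div_assoc', mul_comm 2 (q i), mul_div_mul_left _ _ (hq i)]
  · simp only [hu, mul_sub, mul_left_comm (q _), mul_one, sum_sub_distrib, ← mul_sum, ← sum_mul,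
      hq1, one_mul]

theorem stmt_17_general (s t : ℝ) (hs0 : 0 ≤ s) (hst : s ≤ t) (hts : s * (t - s + 6) ≤ 4 * (1 + t))
    (n : ℕ) (p q : Fin n → ℝ)
    (hq : ∀ i, 0 < q i)
    (hp1 : ∑ i, p i = 1) (hq1 : ∑ i, q i = 1)
    (r R : ℝ) (hr : 0 < r)
    (hbound : ∀ i, r ≤ p i / q i ∧ p i / q i ≤ R) :
    ((R + 1) / 2) ^ (s - t - 1) * (s * R + 4 - s) * Omega n t q p ≤ zeta n s p q ∧
      zeta n s p q ≤ ((r + 1) / 2) ^ (s - t - 1) * (s * r + 4 - s) * Omega n t q p := by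
  have hq0 : ∀ i, q i ≠ 0 := fun i => (hq i).ne'
  have hw : ∀ i ∈ univ, 0 ≤ q i := fun i _ => (hq i).le
  have hx : ∀ i ∈ univ, p i / q i ∈ Set.Icc r R := fun i _ => hbound i
  have hqx : ∑ i, q i * (p i / q i) = 1 := by simp_rw [mul_div_cancel₀ _ (hq0 _)]; exact hp1
  have hratio := antitoneOn_kernelRatio hs0 hst hts
  have hnonneg : ∀ y, r ≤ y → y ∈ Set.Ici (0 : ℝ) := fun y hy => hr.le.trans hy
  rw [zeta_eq_sum_zetaKernel n s p q hq0, Omega_eq_sum_omegaKernel n t p q hq0 hq1]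
  exact ⟨mul_sum_omegaKernel_le_sum_zetaKernel (by linarith)
      (fun y hy => hratio (hnonneg y hy.1.le) (hnonneg R (hy.1.trans hy.2).le) hy.2.le)
      hw hq1 hx hqx,
    sum_zetaKernel_le_mul_sum_omegaKernel (by linarith)
      (fun y hy => hratio (hnonneg r le_rfl) (hnonneg y hy.1.le) hy.1.le) hw hq1 hx hqx⟩

theorem stmt_17 (s t : ℝ) (hs0 : 0 ≤ s) (hs4 : s ≤ 4) (hst : s ≤ t) (hts : s * (t - s + 6) ≤ 4 * (1 + t))
    (n : ℕ) (hn : 2 ≤ n) (p q : Fin n → ℝ)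
    (hp : ∀ i, 0 < p i) (hq : ∀ i, 0 < q i)
    (hp1 : ∑ i, p i = 1) (hq1 : ∑ i, q i = 1)
    (r R : ℝ) (hr : 0 < r) (hrR : r ≤ R)
    (hbound : ∀ i, r ≤ p i / q i ∧ p i / q i ≤ R) :
    ((R + 1) / 2) ^ (s - t - 1) * (s * R + 4 - s) * Omega n t q p ≤ zeta n s p q ∧
      zeta n s p q ≤ ((r + 1) / 2) ^ (s - t - 1) * (s * r + 4 - s) * Omega n t q p :=
  stmt_17_general s t hs0 hst hts n p q hq hp1 hq1 r R hr hbound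
end
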